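/- Let (L₁, …, L_h; w₁, …, w_h) be a vertex hierarchy of height h on the weighted graph G = (V, w₁). Then for all s, t ∈ V and every common ancestor x ∈ Anc(s) ∩ Anc(t): dist_G(s,t) ≤ d(s,x) + d(t,x); in particular, if s and t have a common ancestor then s and t are connected in G, i.e. dist_G(s,t) < ⊤. -/

import Mathlib

/-! By induction on `i`, every weight `w i u v` is at least `dist_G(u, v)`: an augmenting edge
through `x ∈ L_{i-1}` is bounded by the triangle inequality at `x`. Summing over its steps, an
ascending sequence from `s` to `x` is at least as long as `dist_G(s, x)` (and, the weights being
symmetric, as `dist_G(x, s)`); the triangle inequality at a common ancestor finishes the proof. -/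

namespace ISLabel

variable {V : Type*}

/-- Two vertices are adjacent in the weighted graph `w` when they are distinct and
joined by an edge of finite weight. -/
def Adj (w : V → V → ℕ∞) (u v : V) : Prop := u ≠ v ∧ w u v < ⊤

/-- `p` is a walk from `u` to `v` in the weighted graph `w`: a nonempty list of
vertices starting at `u`, ending at `v`, with consecutive vertices adjacent. -/
def IsWalk (w : V → V → ℕ∞) (u v : V) (p : List V) : Prop :=
  p ≠ [] ∧ p.head? = some u ∧ p.getLast? = some v ∧ p.Chain' (Adj w)

/-- The length of a list of vertices: the sum of `f` over consecutive pairs. -/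
def pathLen (f : V → V → ℕ∞) (p : List V) : ℕ∞ :=
  ((p.zip p.tail).map fun e => f e.1 e.2).sum

/-- The distance from `u` to `v` in `w`: the infimum of the lengths of all walks
from `u` to `v` (`⊤` if there is no such walk). -/
noncomputable def wdist (w : V → V → ℕ∞) (u v : V) : ℕ∞ :=
  ⨅ p : {p : List V // IsWalk w u v p}, pathLen w p.1

/-- `I` is an independent set in `w`. -/
def IsIndep (w : V → V → ℕ∞) (I : Set V) : Prop :=
  ∀ u ∈ I, ∀ v ∈ I, ¬ Adj w u v

/-- `w` is a weighted undirected graph: symmetric, and every off-diagonal value is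
either `⊤` (no edge) or a weight `≥ 1`. -/
def IsWGraph (w : V → V → ℕ∞) : Prop :=
  (∀ u v, w u v = w v u) ∧ ∀ u v, u ≠ v → 1 ≤ w u v

/-- `w` is supported on `S`: all weights touching a vertex outside `S` are `⊤`. -/
def SupportedOn (w : V → V → ℕ∞) (S : Set V) : Prop :=
  ∀ u v, u ∉ S ∨ v ∉ S → w u v = ⊤

/-- `VsetOf L i` is the vertex set `V_i = V ∖ (L₁ ∪ … ∪ L_{i-1})`. -/
def VsetOf (L : ℕ → Set V) (i : ℕ) : Set V := {v | ∀ j, 1 ≤ j → j < i → v ∉ L j}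

/-- A vertex hierarchy of height `h ≥ 1` on the weighted graph `w 1`:
pairwise disjoint independent levels `L 1, …, L h` covering `V`, and graphs
`w i` supported on `V_i` obtained by the augmenting-edge construction. -/
structure VertexHierarchy (V : Type*) (h : ℕ) where
  L : ℕ → Set V
  w : ℕ → V → V → ℕ∞
  h_pos : 1 ≤ h
  wgraph : ∀ i, 1 ≤ i → i ≤ h → IsWGraph (w i)
  disj : ∀ i j, 1 ≤ i → i ≤ h → 1 ≤ j → j ≤ h → i ≠ j → ∀ v, v ∈ L i → v ∉ L j
  cover : ∀ v : V, ∃ i, 1 ≤ i ∧ i ≤ h ∧ v ∈ L i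
  supported : ∀ i, 1 ≤ i → i ≤ h → SupportedOn (w i) (VsetOf L i)
  aug : ∀ i, 2 ≤ i → i ≤ h → ∀ u v : V, u ≠ v → u ∈ VsetOf L i → v ∈ VsetOf L i →
    w i u v = min (w (i - 1) u v) (⨅ x ∈ L (i - 1), w (i - 1) u x + w (i - 1) x v)
  indep : ∀ i, 1 ≤ i → i ≤ h → IsIndep (w i) (L i)

/-- The level `ℓ(v)`: the unique `i` with `1 ≤ i ≤ h` and `v ∈ L i`. -/
noncomputable def level {h : ℕ} (H : VertexHierarchy V h) (v : V) : ℕ :=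
  sInf {i | 1 ≤ i ∧ i ≤ h ∧ v ∈ H.L i}

/-- One step of an ascending sequence: go to a strictly higher-level vertex that is
adjacent in the graph at the current vertex's level. -/
def AscStep {h : ℕ} (H : VertexHierarchy V h) (a b : V) : Prop :=
  level H a < level H b ∧ Adj (H.w (level H a)) a b

/-- `p` is an ascending sequence from `v` to `u`. -/
def IsAscending {h : ℕ} (H : VertexHierarchy V h) (v u : V) (p : List V) : Prop :=
  p ≠ [] ∧ p.head? = some v ∧ p.getLast? = some u ∧ p.Chain' (AscStep H)

/-- The set of ancestors of `v`. -/
def Anc {h : ℕ} (H : VertexHierarchy V h) (v : V) : Set V :=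
  {u | ∃ p, IsAscending H v u p}

/-- `d(v,u)`: the infimum of the lengths of ascending sequences from `v` to `u`,
where each step `a → b` costs `w (ℓ(a)) a b`; `⊤` if `u` is not an ancestor of `v`. -/
noncomputable def ancDist {h : ℕ} (H : VertexHierarchy V h) (v u : V) : ℕ∞ :=
  ⨅ p : {p : List V // IsAscending H v u p},
    pathLen (fun a b => H.w (level H a) a b) p.1


section Walks

variable {w f : V → V → ℕ∞} {u v x : V} {p : List V}

lemma pathLen_singleton (f : V → V → ℕ∞) (a : V) : pathLen f [a] = 0 := by
  simp [pathLen]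

lemma pathLen_cons_cons (f : V → V → ℕ∞) (a b : V) (l : List V) :
    pathLen f (a :: b :: l) = f a b + pathLen f (b :: l) := by
  simp [pathLen]

lemma pathLen_append (f : V → V → ℕ∞) :
    ∀ {p : List V} {x : V} (r : List V), p.getLast? = some x →
      pathLen f (p ++ r) = pathLen f p + pathLen f (x :: r)
  | [], _, _, h => by simp at h
  | [a], x, r, h => by
    obtain rfl : a = x := by simpa using h
    simp [pathLen_singleton]
  | a :: b :: l, x, r, h => by
    rw [List.getLast?_cons_cons] at h
    rw [List.cons_append, List.cons_append, pathLen_cons_cons, pathLen_cons_cons,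
      ← List.cons_append, pathLen_append f r h, add_assoc]

lemma pathLen_lt_top {R : V → V → Prop} (hf : ∀ a b, R a b → f a b < ⊤) :
    ∀ {p : List V}, p.IsChain R → pathLen f p < ⊤
  | [], _ => by simp [pathLen]
  | [a], _ => by simp [pathLen_singleton]
  | a :: b :: l, hc => by
    obtain ⟨hab, hc⟩ := List.isChain_cons_cons.1 hc
    rw [pathLen_cons_cons]
    exact ENat.add_lt_top.2 ⟨hf a b hab, pathLen_lt_top hf hc⟩

lemma le_pathLen_of_triangle {D : V → V → ℕ∞} {R : V → V → Prop}
    (hself : ∀ a, D a a = 0) (htri : ∀ a b c, D a c ≤ D a b + D b c)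
    (hstep : ∀ a b, R a b → D a b ≤ f a b) :
    ∀ {p : List V} {u v : V}, p.head? = some u → p.getLast? = some v → p.IsChain R →
      D u v ≤ pathLen f p
  | [], _, _, hu, _, _ => by simp at hu
  | [a], u, v, hu, hv, _ => by
    obtain rfl : a = u := by simpa using hu
    obtain rfl : a = v := by simpa using hv
    simp [hself]
  | a :: b :: l, u, v, hu, hv, hc => by
    obtain rfl : a = u := by simpa using hu
    rw [List.getLast?_cons_cons] at hv
    obtain ⟨hab, hc⟩ := List.isChain_cons_cons.1 hc
    rw [pathLen_cons_cons]
    exact (htri a b v).trans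
      (add_le_add (hstep a b hab) (le_pathLen_of_triangle hself htri hstep rfl hv hc))

lemma IsWalk.append {r : List V} (hp : IsWalk w u x p) (hq : IsWalk w x v (x :: r)) :
    IsWalk w u v (p ++ r) := by
  obtain ⟨hp_ne, hp_head, hp_last, hp_chain⟩ := hp
  obtain ⟨-, -, hq_last, hq_chain⟩ := hq
  refine ⟨by simp [hp_ne], by simp [List.head?_append, hp_head], ?_, ?_⟩
  · rw [List.getLast?_cons] at hq_last
    cases r <;> simp_all [List.getLast?_append]
  · refine hp_chain.append hq_chain.tail fun a ha b hb => ?_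
    obtain rfl : a = x := by simpa [hp_last] using ha.symm
    exact (List.isChain_cons.1 hq_chain).1 b hb

lemma wdist_le_pathLen (hp : IsWalk w u v p) : wdist w u v ≤ pathLen w p :=
  iInf_le (fun q : {q // IsWalk w u v q} => pathLen w q.1) ⟨p, hp⟩

lemma wdist_self (w : V → V → ℕ∞) (v : V) : wdist w v v = 0 :=
  nonpos_iff_eq_zero.1 <| by
    simpa [pathLen_singleton] using
      wdist_le_pathLen (w := w) ⟨List.cons_ne_nil v [], rfl, rfl, List.isChain_singleton v⟩

lemma wdist_le_weight (w : V → V → ℕ∞) (huv : u ≠ v) : wdist w u v ≤ w u v := by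
  rcases (le_top : w u v ≤ ⊤).lt_or_eq with huv_lt | huv_top
  · simpa [pathLen_cons_cons, pathLen_singleton] using
      wdist_le_pathLen (w := w) ⟨by simp, rfl, rfl, List.isChain_pair.2 ⟨huv, huv_lt⟩⟩
  · simp [huv_top]

lemma wdist_triangle (w : V → V → ℕ∞) (u x v : V) :
    wdist w u v ≤ wdist w u x + wdist w x v := by
  refine ENat.le_iInf_add_iInf fun ⟨p, hp⟩ ⟨q, hq⟩ => ?_
  obtain ⟨r, rfl⟩ := List.head?_eq_some_iff.1 hq.2.1
  rw [← pathLen_append w r hp.2.2.1]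
  exact wdist_le_pathLen (hp.append hq)

end Walks

section Hierarchy

variable {h : ℕ} (H : VertexHierarchy V h)

lemma level_spec (v : V) : 1 ≤ level H v ∧ level H v ≤ h ∧ v ∈ H.L (level H v) :=
  Nat.sInf_mem (H.cover v)

lemma wdist_le_weight_of_le {i : ℕ} (hi : 1 ≤ i) (hih : i ≤ h) (u v : V) :
    wdist (H.w 1) u v ≤ H.w i u v := by
  induction i, hi using Nat.le_induction generalizing u v with
  | base =>
    rcases eq_or_ne u v with rfl | huv
    · simp [wdist_self]
    · exact wdist_le_weight _ huv
  | succ n hn ih =>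
    have ih := ih (by omega)
    rcases eq_or_ne u v with rfl | huv
    · simp [wdist_self]
    by_cases huv_mem : u ∈ VsetOf H.L (n + 1) ∧ v ∈ VsetOf H.L (n + 1)
    · rw [H.aug (n + 1) (by omega) hih u v huv huv_mem.1 huv_mem.2, Nat.add_sub_cancel]
      refine le_min (ih u v) (le_iInf₂ fun y _ => ?_)
      exact (wdist_triangle _ u y v).trans (add_le_add (ih u y) (ih y v))
    · rw [H.supported (n + 1) (by omega) hih u v (not_and_or.1 huv_mem)]
      exact le_top

lemma wdist_le_weight_level (a b : V) : wdist (H.w 1) a b ≤ H.w (level H a) a b :=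
  wdist_le_weight_of_le H (level_spec H a).1 (level_spec H a).2.1 a b

lemma wdist_le_ancDist (v u : V) : wdist (H.w 1) v u ≤ ancDist H v u :=
  le_iInf fun ⟨_, _, hv, hu, hc⟩ =>
    le_pathLen_of_triangle (wdist_self _) (wdist_triangle _)
      (fun a b _ => wdist_le_weight_level H a b) hv hu hc

-- Read the ascending sequence backwards: `fun a b => wdist (H.w 1) b a` is again a triangle bound.
lemma wdist_swap_le_ancDist (v u : V) : wdist (H.w 1) u v ≤ ancDist H v u := by
  refine le_iInf fun ⟨_, _, hv, hu, hc⟩ =>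
    le_pathLen_of_triangle (D := fun a b => wdist (H.w 1) b a) (wdist_self _)
      (fun a b c => (wdist_triangle _ c b a).trans_eq (add_comm _ _))
      (fun a b _ => ?_) hv hu hc
  obtain ⟨hl, hlh, -⟩ := level_spec H a
  rw [← (H.wgraph _ hl hlh).1 b a]
  exact wdist_le_weight_of_le H hl hlh b a

lemma ancDist_lt_top {v u : V} (hu : u ∈ Anc H v) : ancDist H v u < ⊤ := by
  obtain ⟨p, hp⟩ := hu
  exact (iInf_le (fun q : {q // IsAscending H v u q} => pathLen _ q.1) ⟨p, hp⟩).trans_lt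
    (pathLen_lt_top (fun _ _ hab => hab.2.2) hp.2.2.2)

end Hierarchy

theorem dist_le_common_ancestor_general {h : ℕ} (H : VertexHierarchy V h) :
    ∀ s t : V,
      (∀ x ∈ Anc H s ∩ Anc H t,
        wdist (H.w 1) s t ≤ ancDist H s x + ancDist H t x) ∧
      ((Anc H s ∩ Anc H t).Nonempty → wdist (H.w 1) s t < ⊤) := by
  intro s t
  have bound : ∀ x ∈ Anc H s ∩ Anc H t,
      wdist (H.w 1) s t ≤ ancDist H s x + ancDist H t x := fun x _ =>
    (wdist_triangle _ s x t).trans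
      (add_le_add (wdist_le_ancDist H s x) (wdist_swap_le_ancDist H t x))
  refine ⟨bound, fun ⟨x, hxs, hxt⟩ => ?_⟩
  exact (bound x ⟨hxs, hxt⟩).trans_lt
    (ENat.add_lt_top.2 ⟨ancDist_lt_top H hxs, ancDist_lt_top H hxt⟩)

/-- common ancestors give upper bounds on the distance; in
particular vertices with a common ancestor are connected. -/
theorem dist_le_common_ancestor [Fintype V] {h : ℕ} (H : VertexHierarchy V h) :
    ∀ s t : V,
      (∀ x ∈ Anc H s ∩ Anc H t,
        wdist (H.w 1) s t ≤ ancDist H s x + ancDist H t x) ∧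
      ((Anc H s ∩ Anc H t).Nonempty → wdist (H.w 1) s t < ⊤) :=
  dist_le_common_ancestor_general H

end ISLabel
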